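/- In the bounded-degree setting with a critical hospital, if for every element X ∈ V⁺ there exists an element Y ∈ V⁻ such that there is a directed path from X to Y in the directed graph 𝐃 = (V, A), then there exists a stable matching in G. -/

import Mathlib

open Classical

variable {D H : Type}

def edgesD (E : Set (D × H)) (d : D) : Set (D × H) := {e ∈ E | e.1 = d}

def edgesH (E : Set (D × H)) (h : H) : Set (D × H) := {e ∈ E | e.2 = h}

def optD (E : Set (D × H)) (d : D) : Set (Option (D × H)) :=
  insert none (some '' edgesD E d)

def optH (E : Set (D × H)) (h : H) : Set (Option (D × H)) :=
  insert none (some '' edgesH E h)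

/-- An instance of the strongly stable matching problem with closures:
a bipartite graph between doctors `D` and hospitals `H` with edge set `E`,
a set `S` of closable hospitals, and for each vertex a transitive, total
preference relation on its incident edges together with `∅` (modelled by
`Option`, where `none` plays the role of `∅`), such that every incident
edge is strictly preferred to `∅`. -/
structure SSMC (D H : Type) where
  E : Set (D × H)
  S : Set H
  prefD : D → Option (D × H) → Option (D × H) → Prop
  prefH : H → Option (D × H) → Option (D × H) → Prop
  prefD_trans : ∀ d, ∀ e ∈ optD E d, ∀ f ∈ optD E d, ∀ g ∈ optD E d,
    prefD d e f → prefD d f g → prefD d e g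
  prefD_total : ∀ d, ∀ e ∈ optD E d, ∀ f ∈ optD E d, prefD d e f ∨ prefD d f e
  prefD_none : ∀ d, ∀ e ∈ edgesD E d, prefD d (some e) none ∧ ¬ prefD d none (some e)
  prefH_trans : ∀ h, ∀ e ∈ optH E h, ∀ f ∈ optH E h, ∀ g ∈ optH E h,
    prefH h e f → prefH h f g → prefH h e g
  prefH_total : ∀ h, ∀ e ∈ optH E h, ∀ f ∈ optH E h, prefH h e f ∨ prefH h f e
  prefH_none : ∀ h, ∀ e ∈ edgesH E h, prefH h (some e) none ∧ ¬ prefH h none (some e)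

namespace SSMC

variable (I : SSMC D H)

/-- `e ≻_d f` -/
def strictD (d : D) (e f : Option (D × H)) : Prop := I.prefD d e f ∧ ¬ I.prefD d f e

/-- `e ∼_d f` -/
def simD (d : D) (e f : Option (D × H)) : Prop := I.prefD d e f ∧ I.prefD d f e

/-- `e ≻_h f` -/
def strictH (h : H) (e f : Option (D × H)) : Prop := I.prefH h e f ∧ ¬ I.prefH h f e

/-- `e ∼_h f` -/
def simH (h : H) (e f : Option (D × H)) : Prop := I.prefH h e f ∧ I.prefH h f e

/-- A matching: a subset of `E` with at most one edge at each vertex. -/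
def isMatching (μ : Set (D × H)) : Prop :=
  μ ⊆ I.E ∧ (∀ e ∈ μ, ∀ f ∈ μ, e.1 = f.1 → e = f) ∧
    (∀ e ∈ μ, ∀ f ∈ μ, e.2 = f.2 → e = f)

end SSMC

/-- `μ(d)`: the edge of `μ` at doctor `d` (or `none`). -/
noncomputable def muD (μ : Set (D × H)) (d : D) : Option (D × H) :=
  if h : ∃ e, e ∈ μ ∧ e.1 = d then some h.choose else none

/-- `μ(h)`: the edge of `μ` at hospital `h` (or `none`). -/
noncomputable def muH (μ : Set (D × H)) (h : H) : Option (D × H) :=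
  if hh : ∃ e, e ∈ μ ∧ e.2 = h then some hh.choose else none

namespace SSMC

variable (I : SSMC D H)

/-- `e` blocks the matching `μ`: `e ∈ E \ μ`, `e` weakly blocks `μ` on both of its
endpoints and strongly blocks `μ` on at least one of them (where blocking on a
hospital `h ∈ S` additionally requires `μ(h) ≠ ∅`). -/
def blocks (μ : Set (D × H)) (e : D × H) : Prop :=
  e ∈ I.E ∧ e ∉ μ ∧
  I.prefD e.1 (some e) (muD μ e.1) ∧
  (I.prefH e.2 (some e) (muH μ e.2) ∧ (e.2 ∈ I.S → muH μ e.2 ≠ none)) ∧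
  (I.strictD e.1 (some e) (muD μ e.1) ∨
    (I.strictH e.2 (some e) (muH μ e.2) ∧ (e.2 ∈ I.S → muH μ e.2 ≠ none)))

/-- A stable matching: no edge blocks it. -/
def stable (μ : Set (D × H)) : Prop :=
  I.isMatching μ ∧ ∀ e, ¬ I.blocks μ e

/-- `Ch_D(F)`: union over doctors `d` of the most preferred edges of `F(d)`. -/
def ChD (F : Set (D × H)) : Set (D × H) :=
  {e ∈ F | ∀ f ∈ F, f.1 = e.1 → I.prefD e.1 (some e) (some f)}

/-- `Ch_H(F)`: union over hospitals `h` of the most preferred edges of `F(h)`. -/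
def ChH (F : Set (D × H)) : Set (D × H) :=
  {e ∈ F | ∀ f ∈ F, f.2 = e.2 → I.prefH e.2 (some e) (some f)}

/-- `Ch(F) = Ch_H(Ch_D(F))`. -/
def Ch (F : Set (D × H)) : Set (D × H) := I.ChH (I.ChD F)

/-- `e ≻_d F` for a flat set `F`. -/
def dSucc (F : Set (D × H)) (e : D × H) : Prop :=
  (∀ f ∈ F, f.1 ≠ e.1) ∨ ∃ f ∈ F, f.1 = e.1 ∧ I.strictD e.1 (some e) (some f)

/-- `e ∼_d F` for a flat set `F`. -/
def dSim (F : Set (D × H)) (e : D × H) : Prop :=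
  ∃ f ∈ F, f.1 = e.1 ∧ I.simD e.1 (some e) (some f)

/-- `block(F)` for a flat set `F ⊆ E`. -/
def setBlock (F : Set (D × H)) : Set (D × H) :=
  {e | e ∈ I.E ∧ e ∉ F ∧ (∃ f ∈ F, f.2 = e.2) ∧
    (I.dSucc F e ∨ I.dSim F e) ∧
    (I.dSucc F e → ∃ f ∈ F, f.2 = e.2 ∧ I.prefH e.2 (some e) (some f)) ∧
    (I.dSim F e → ∃ f ∈ F, f.2 = e.2 ∧ I.strictH e.2 (some e) (some f))}

/-- `L = Ch(E \ R)`. -/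
def Lset (R : Set (D × H)) : Set (D × H) := I.Ch (I.E \ R)

/-- The pre-processing conditions (R1)–(R5) on a pair `(R, μ)`. -/
def preproc (R μ : Set (D × H)) : Prop :=
  R ⊆ I.E ∧ I.isMatching μ ∧
  -- (R1)
  (∀ σ, I.stable σ → ∀ e ∈ R, e ∉ σ) ∧
  -- (R2)
  μ ⊆ I.Ch (I.E \ R) ∧
  -- (R3)
  (∀ d : D, (∃ e ∈ I.E \ R, e.1 = d) → ∃ e ∈ μ, e.1 = d) ∧
  -- (R4)
  R ∩ I.setBlock (I.Ch (I.E \ R)) = ∅ ∧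
  -- (R5)
  (∀ d : D, ∀ e ∈ R, e.1 = d → ∀ f ∈ I.E \ R, f.1 = d → I.prefD d (some e) (some f))

/-- `h` is a critical hospital with respect to `(R, μ)`. -/
def critical (R μ : Set (D × H)) (h : H) : Prop :=
  h ∉ I.S ∧ (∀ e ∈ μ, e.2 ≠ h) ∧
  ((∃ e ∈ I.Ch (I.E \ R), e.2 = h) ∨ (∃ e ∈ R, e.2 = h))

/-- Assumption (★): every doctor strictly prefers any acceptable hospital
outside `S` to any acceptable hospital in `S`. -/
def starAssumption : Prop :=
  ∀ (d : D) (h h' : H), (d, h) ∈ I.E → (d, h') ∈ I.E → h ∈ I.S → h' ∉ I.S →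
    I.strictD d (some (d, h')) (some (d, h))

end SSMC

/-- Adjacency relation on `D ⊕ H` induced by an edge set `L`. -/
def adjRel (L : Set (D × H)) : (D ⊕ H) → (D ⊕ H) → Prop
  | Sum.inl d, Sum.inr h => (d, h) ∈ L
  | Sum.inr h, Sum.inl d => (d, h) ∈ L
  | _, _ => False

/-- `X` is a connected component of the bipartite graph `(D, H; L)`. -/
def isComponent (L : Set (D × H)) (X : Set (D ⊕ H)) : Prop :=
  ∃ v ∈ X, X = {w | Relation.ReflTransGen (adjRel L) v w}

/-- `D_X`: the doctors in `X`. -/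
def Dside (X : Set (D ⊕ H)) : Set D := {d | Sum.inl d ∈ X}

/-- `H_X`: the hospitals in `X`. -/
def Hside (X : Set (D ⊕ H)) : Set H := {h | Sum.inr h ∈ X}

namespace SSMC

variable (I : SSMC D H)

/-- `Leaf_L(D_X)`: the doctors of `X` incident to exactly one edge of `L = Ch(E \ R)`. -/
def leafSet (R : Set (D × H)) (X : Set (D ⊕ H)) : Set D :=
  {d ∈ Dside X | (edgesD (I.Lset R) d).ncard = 1}

/-- `X ∈ 𝓒`: connected component of `G* = (D, H; Ch(E \ R))` with at least two vertices. -/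
def memC (R : Set (D × H)) (X : Set (D ⊕ H)) : Prop :=
  isComponent (I.Lset R) X ∧ 2 ≤ X.ncard

/-- `X ∈ 𝓟`. -/
def memP (R : Set (D × H)) (X : Set (D ⊕ H)) : Prop :=
  I.memC R X ∧ (Dside X).ncard = (Hside X).ncard

/-- `X ∈ 𝓠`. -/
def memQ (R : Set (D × H)) (X : Set (D ⊕ H)) : Prop :=
  I.memC R X ∧ (Dside X).ncard < (Hside X).ncard

/-- `X ∈ 𝓟*`. -/
def memPstar (R : Set (D × H)) (X : Set (D ⊕ H)) : Prop :=
  I.memP R X ∧ (I.leafSet R X).ncard = 1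

/-- `X ∈ 𝓡`: a component consisting of a single hospital `h ∈ H \ S` with `R(h) ≠ ∅`. -/
def memRcal (R : Set (D × H)) (X : Set (D ⊕ H)) : Prop :=
  isComponent (I.Lset R) X ∧
    ∃ h : H, X = {Sum.inr h} ∧ h ∉ I.S ∧ ∃ e ∈ R, e.2 = h

end SSMC

namespace SSMC

variable (I : SSMC D H)

/-- The vertex set `𝓥 = 𝓟* ∪ 𝓠 ∪ 𝓡` of the directed graph `𝐃`. -/
def memV (R : Set (D × H)) (X : Set (D ⊕ H)) : Prop :=
  I.memPstar R X ∨ I.memQ R X ∨ I.memRcal R X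

/-- The arc relation of the directed graph `𝐃 = (𝓥, A)`: there is an arc from `X`
to `Y` iff `X, Y ∈ 𝓥` are distinct and conditions (P1)–(P4) hold, phrased via the
(unique) leaf doctor `d_Y` of `Y`, the hospital `h_Y` with `(d_Y, h_Y) ∈ L`, and
the other hospital `h̄_Y` acceptable to `d_Y`. -/
def arc (R μ : Set (D × H)) (X Y : Set (D ⊕ H)) : Prop :=
  I.memV R X ∧ I.memV R Y ∧ X ≠ Y ∧ I.memPstar R Y ∧
  ∃ (dY : D) (hY hbY : H),
    dY ∈ I.leafSet R Y ∧ (dY, hY) ∈ I.Lset R ∧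
    hbY ≠ hY ∧ (dY, hbY) ∈ I.E ∧
    -- (P1)
    (edgesD I.E dY).ncard = 2 ∧
    Sum.inr hbY ∈ X ∧
    I.strictD dY (some (dY, hY)) (some (dY, hbY)) ∧
    -- (P2)
    (I.memPstar R X →
      ∃ (dX : D) (hX : H), dX ∈ I.leafSet R X ∧ (dX, hX) ∈ I.Lset R ∧ hX = hbY ∧
        I.strictH hbY (some (dY, hbY)) (some (dX, hbY))) ∧
    -- (P3)
    (I.memQ R X →
      ∃ e ∈ I.Lset R, e.2 = hbY ∧ I.prefH hbY (some (dY, hbY)) (some e)) ∧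
    -- (P4)
    (I.memRcal R X →
      ∀ e ∈ R, e.2 = hbY →
        (I.simD e.1 (some e) (muD μ e.1) → I.prefH hbY (some (dY, hbY)) (some e)) ∧
        (I.strictD e.1 (some e) (muD μ e.1) → I.strictH hbY (some (dY, hbY)) (some e)))

/-- `X ∈ 𝓥⁺`. -/
def memVplus (R : Set (D × H)) (X : Set (D ⊕ H)) : Prop :=
  (I.memQ R X ∧ ∀ h ∈ Hside X, h ∉ I.S) ∨ I.memRcal R X

/-- `X ∈ 𝓥⁻`. -/
def memVminus (R : Set (D × H)) (X : Set (D ⊕ H)) : Prop :=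
  I.memPstar R X ∧ ∃ dX ∈ I.leafSet R X, ∃ hX : H, (dX, hX) ∈ I.Lset R ∧ hX ∈ I.S

end SSMC


/-!
Choose, for every `X ∈ 𝓥⁺`, one directed path of `𝐃` into `𝓥⁻`. An arc into `Y` must leave
the component containing `h̄_Y`, so in-degrees in `𝐃` are at most one and the chosen paths are
disjoint. Since doctors have degree at most two, a component of `G*` has at most one hospital
more than doctors; flipping `μ` along alternating paths inside the components of `𝓠`, we get a
matching `ν ⊆ L` covering the same doctors whose unmatched hospital in each `X ∈ 𝓠` is the first
hospital `h̄` of the path chosen out of `X` (or one in `S` if there is none). Finally every leaf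
doctor `d_Y` on a chosen path moves from `h_Y` to `h̄_Y`. A vacated `h_Y` either receives the next
doctor of the path, whom it prefers by (P2), or lies in `S` at the end of the path; (P2)–(P4)
together with (R4) and (R5) show that every hospital weakly prefers its new doctor to the edges
that could block, so the result is stable.
-/

theorem Set.Finite.exists_forall_rel_of_total {α : Type*} {r : α → α → Prop} {s : Set α}
    (hs : s.Finite) (hne : s.Nonempty) (htot : ∀ a ∈ s, ∀ b ∈ s, r a b ∨ r b a)
    (htrans : ∀ a ∈ s, ∀ b ∈ s, ∀ c ∈ s, r a b → r b c → r a c) :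
    ∃ a ∈ s, ∀ b ∈ s, r a b := by
  -- an element dominating the most elements of `s` dominates all of them
  obtain ⟨a, ha, hmax⟩ := hs.toFinset.exists_max_image (fun a => {b ∈ s | r a b}.ncard)
    (by simpa using hne)
  rw [Set.Finite.mem_toFinset] at ha
  refine ⟨a, ha, fun b hb => by_contra fun hab => ?_⟩
  have hba : r b a := (htot a ha b hb).resolve_left hab
  have hlt : {c ∈ s | r a c} ⊂ {c ∈ s | r b c} := by
    have hsub : {c ∈ s | r a c} ⊆ {c ∈ s | r b c} :=
      fun c hc => ⟨hc.1, htrans b hb a ha c hc.1 hba hc.2⟩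
    exact (Set.ssubset_iff_of_subset hsub).2
      ⟨b, ⟨hb, (htot b hb b hb).elim id id⟩, fun h => hab h.2⟩
  exact (hmax b (hs.mem_toFinset.2 hb)).not_gt
    (Set.ncard_lt_ncard hlt (hs.subset fun _ hc => hc.1))

/-- One `r`-path out of every vertex of `P`, followed by `next` until it reaches `T`; `A` is the
set of vertices on these paths after their first. -/
structure IsPathSystem {α : Type*} (r : α → α → Prop) (P T A : Set α) (next : α → α) :
    Prop where
  next_mem : ∀ a, a ∈ P ∨ (a ∈ A ∧ a ∉ T) → next a ∈ A ∧ r a (next a)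
  exists_eq_next : ∀ z ∈ A, ∃ a, (a ∈ P ∨ (a ∈ A ∧ a ∉ T)) ∧ z = next a

theorem exists_isPathSystem {α : Type*} (r : α → α → Prop) {P T : Set α} (hPT : Disjoint P T)
    (hreach : ∀ s ∈ P, ∃ t ∈ T, Relation.ReflTransGen r s t) :
    ∃ A next, IsPathSystem r P T A next := by
  let good : α → Prop := fun a => ∃ t ∈ T, Relation.ReflTransGen r a t
  let next : α → α := fun a => if h : ∃ b, r a b ∧ good b then h.choose else a
  have hnext : ∀ a, good a → a ∉ T → r a (next a) ∧ good (next a) := by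
    rintro a ⟨t, ht, hat⟩ haT
    have hex : ∃ b, r a b ∧ good b := by
      rcases hat.cases_head with rfl | ⟨b, hab, hbt⟩
      · exact absurd ht haT
      · exact ⟨b, hab, t, ht, hbt⟩
    simpa only [next, dif_pos hex] using hex.choose_spec
  let step : α → α → Prop := fun a b => good a ∧ a ∉ T ∧ b = next a
  let A : Set α := {z | ∃ s ∈ P, Relation.TransGen step s z}
  have hgood : ∀ z ∈ A, good z := by
    rintro z ⟨s, -, hsz⟩
    obtain ⟨a, -, ha, haT, rfl⟩ := Relation.TransGen.tail'_iff.1 hsz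
    exact (hnext a ha haT).2
  refine ⟨A, next, ⟨?_, ?_⟩⟩
  · rintro a (haP | ⟨⟨s, hsP, hsa⟩, haT⟩)
    · have haT : a ∉ T := Set.disjoint_left.1 hPT haP
      have ha : good a := hreach a haP
      exact ⟨⟨a, haP, .single ⟨ha, haT, rfl⟩⟩, (hnext a ha haT).1⟩
    · have ha : good a := hgood a ⟨s, hsP, hsa⟩
      exact ⟨⟨s, hsP, hsa.tail ⟨ha, haT, rfl⟩⟩, (hnext a ha haT).1⟩
  · rintro z ⟨s, hsP, hsz⟩
    rcases Relation.TransGen.tail'_iff.1 hsz with ⟨a, hsa, -, haT, rfl⟩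
    rcases hsa.cases_head with rfl | ⟨b, hsb, hba⟩
    · exact ⟨s, Or.inl hsP, rfl⟩
    · exact ⟨a, Or.inr ⟨⟨s, hsP, Relation.TransGen.head'_iff.2 ⟨b, hsb, hba⟩⟩, haT⟩, rfl⟩

section BipartiteGraph

variable {L : Set (D × H)}

theorem adjRel_symm {a b : D ⊕ H} (h : adjRel L a b) : adjRel L b a := by
  cases a <;> cases b <;> simp_all [adjRel]

def bipGraph (L : Set (D × H)) : SimpleGraph (D ⊕ H) where
  Adj := adjRel L
  symm := ⟨fun _ _ => adjRel_symm⟩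
  loopless := ⟨fun a => by cases a <;> simp [adjRel]⟩

theorem reachable_bipGraph_iff {a b : D ⊕ H} :
    (bipGraph L).Reachable a b ↔ Relation.ReflTransGen (adjRel L) a b :=
  SimpleGraph.reachable_iff_reflTransGen a b

def componentOf (L : Set (D × H)) (v : D ⊕ H) : Set (D ⊕ H) :=
  {w | Relation.ReflTransGen (adjRel L) v w}

theorem isComponent_componentOf (v : D ⊕ H) : isComponent L (componentOf L v) :=
  ⟨v, .refl, rfl⟩

theorem mem_componentOf_self (v : D ⊕ H) : v ∈ componentOf L v := .refl

theorem componentOf_inr_eq_singleton {h : H} (hL : ∀ e ∈ L, e.2 ≠ h) :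
    componentOf L (.inr h) = {.inr h} := by
  refine Set.eq_singleton_iff_unique_mem.2 ⟨mem_componentOf_self _, fun w hw => ?_⟩
  rcases Relation.ReflTransGen.cases_head hw with rfl | ⟨c, hc, -⟩
  · rfl
  · cases c with
    | inl d => exact absurd rfl (hL (d, h) hc)
    | inr _ => exact hc.elim

namespace isComponent

variable {X Y : Set (D ⊕ H)} {a b : D ⊕ H}

theorem mem_iff_reachable (hX : isComponent L X) (ha : a ∈ X) :
    b ∈ X ↔ (bipGraph L).Reachable a b := by
  obtain ⟨v, -, rfl⟩ := hX
  have hva : (bipGraph L).Reachable v a := reachable_bipGraph_iff.2 ha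
  change Relation.ReflTransGen _ v b ↔ _
  rw [← reachable_bipGraph_iff]
  exact ⟨hva.symm.trans, hva.trans⟩

theorem reachable (hX : isComponent L X) (ha : a ∈ X) (hb : b ∈ X) :
    (bipGraph L).Reachable a b :=
  (hX.mem_iff_reachable ha).1 hb

theorem eq_of_mem (hX : isComponent L X) (hY : isComponent L Y) (haX : a ∈ X) (haY : a ∈ Y) :
    X = Y := by
  ext b
  rw [hX.mem_iff_reachable haX, hY.mem_iff_reachable haY]

theorem inl_mem_iff (hX : isComponent L X) {e : D × H} (he : e ∈ L) :
    Sum.inl e.1 ∈ X ↔ Sum.inr e.2 ∈ X := by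
  have hadj : (bipGraph L).Adj (.inl e.1) (.inr e.2) := he
  exact ⟨fun h => (hX.mem_iff_reachable h).2 hadj.reachable,
    fun h => (hX.mem_iff_reachable h).2 hadj.symm.reachable⟩

theorem exists_mem_of_inl [Finite D] [Finite H] (hX : isComponent L X) (h2 : 2 ≤ X.ncard)
    {d : D} (hd : Sum.inl d ∈ X) : ∃ e ∈ L, e.1 = d := by
  obtain ⟨w, hwX, hwd⟩ := Set.exists_ne_of_one_lt_ncard h2 (Sum.inl d)
  obtain ⟨p⟩ := hX.reachable hd hwX
  cases p with
  | nil => exact absurd rfl hwd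
  | @cons _ u _ hadj _ =>
    cases u with
    | inl _ => exact hadj.elim
    | inr h => exact ⟨(d, h), hadj, rfl⟩

end isComponent

theorem ncard_eq_ncard_Dside_add_ncard_Hside [Finite D] [Finite H] (X : Set (D ⊕ H)) :
    X.ncard = (Dside X).ncard + (Hside X).ncard := by
  have hX : X = Sum.inl '' Dside X ∪ Sum.inr '' Hside X := by
    ext w
    cases w <;> simp [Dside, Hside]
  nth_rewrite 1 [hX]
  rw [Set.ncard_union_eq (by simp [Set.disjoint_left]),
    Set.ncard_image_of_injective _ Sum.inl_injective,
    Set.ncard_image_of_injective _ Sum.inr_injective]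

theorem ncard_le_two_mul_ncard_fst [Finite D] [Finite H] {F : Set (D × H)} {U : Set D}
    (hdeg : ∀ d, (edgesD F d).ncard ≤ 2) (hU : ∀ e ∈ F, e.1 ∈ U) : F.ncard ≤ 2 * U.ncard := by
  classical
  have hsub : F ⊆ ⋃ d ∈ (Set.toFinite U).toFinset, edgesD F d := fun e he =>
    Set.mem_biUnion ((Set.toFinite U).mem_toFinset.2 (hU e he)) ⟨he, rfl⟩
  calc F.ncard ≤ (⋃ d ∈ (Set.toFinite U).toFinset, edgesD F d).ncard :=
        Set.ncard_le_ncard hsub (Set.toFinite _)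
    _ ≤ ∑ d ∈ (Set.toFinite U).toFinset, (edgesD F d).ncard := Finset.set_ncard_biUnion_le _ _
    _ ≤ (Set.toFinite U).toFinset.card * 2 := Finset.sum_le_card_nsmul _ _ _ fun d _ => hdeg d
    _ = 2 * U.ncard := by rw [Set.ncard_eq_toFinset_card U, mul_comm]

theorem isComponent.ncard_sdiff_le [Finite D] [Finite H] {X : Set (D ⊕ H)}
    (hX : isComponent L X) {v : D ⊕ H} (hvX : v ∈ X) :
    (X \ {v}).ncard ≤ {e ∈ L | Sum.inl e.1 ∈ X}.ncard := by
  let LX : Set (D × H) := {e ∈ L | Sum.inl e.1 ∈ X}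
  -- the edge to a vertex closer to `v` (in a BFS tree from `v`) is injective on `X \ {v}`
  have hparent : ∀ w : ↥(X \ {v}), ∃ e ∈ LX,
      (w.1 = .inl e.1 ∧ (bipGraph L).dist (.inr e.2) v < (bipGraph L).dist w.1 v) ∨
      (w.1 = .inr e.2 ∧ (bipGraph L).dist (.inl e.1) v < (bipGraph L).dist w.1 v) := by
    rintro ⟨w, hwX, hwv⟩
    obtain ⟨p, hp⟩ := (hX.reachable hwX hvX).exists_walk_length_eq_dist
    cases p with
    | nil => exact absurd rfl hwv
    | @cons _ u _ hadj q =>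
      have hlt : (bipGraph L).dist u v < (bipGraph L).dist w v := by
        have := SimpleGraph.dist_le q
        simp only [SimpleGraph.Walk.length_cons] at hp
        omega
      have huX : u ∈ X := (hX.mem_iff_reachable hwX).2 hadj.reachable
      cases w with
      | inl d =>
        cases u with
        | inl _ => exact hadj.elim
        | inr h => exact ⟨(d, h), ⟨hadj, hwX⟩, .inl ⟨rfl, hlt⟩⟩
      | inr h =>
        cases u with
        | inl d => exact ⟨(d, h), ⟨hadj.symm, huX⟩, .inr ⟨rfl, hlt⟩⟩
        | inr _ => exact hadj.elim
  choose F hFL hFdist using hparent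
  have hinj : Function.Injective fun w => (⟨F w, hFL w⟩ : LX) := by
    intro w₁ w₂ heq
    have h1 := hFdist w₁
    have h2 := hFdist w₂
    rw [show F w₁ = F w₂ from congrArg Subtype.val heq] at h1
    apply Subtype.ext
    rcases h1 with ⟨e1, d1⟩ | ⟨e1, d1⟩ <;> rcases h2 with ⟨e2, d2⟩ | ⟨e2, d2⟩
    · rw [e1, e2]
    · rw [← e1] at d2; rw [← e2] at d1; omega
    · rw [← e1] at d2; rw [← e2] at d1; omega
    · rw [e1, e2]
  simpa only [Nat.card_coe_set_eq] using Nat.card_le_card_of_injective _ hinj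

theorem isComponent.ncard_Hside_le [Finite D] [Finite H]
    (hdeg : ∀ d, (edgesD L d).ncard ≤ 2) {X : Set (D ⊕ H)} (hX : isComponent L X) :
    (Hside X).ncard ≤ (Dside X).ncard + 1 := by
  obtain ⟨v, hvX, -⟩ := id hX
  have hcard := hX.ncard_sdiff_le hvX
  have hLX : {e ∈ L | Sum.inl e.1 ∈ X}.ncard ≤ 2 * (Dside X).ncard :=
    ncard_le_two_mul_ncard_fst (fun d => (Set.ncard_le_ncard (t := edgesD L d)
      (fun _ he => ⟨he.1.1, he.2⟩) (Set.toFinite _)).trans (hdeg d)) fun _ he => he.2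
  have := ncard_eq_ncard_Dside_add_ncard_Hside X
  rw [Set.ncard_sdiff_singleton_of_mem hvX] at hcard
  omega

end BipartiteGraph

section Matching

variable {L ν : Set (D × H)}

theorem eq_or_eq_of_ncard_edgesD_le_two [Finite D] [Finite H] {F : Set (D × H)} {d : D}
    (hdeg : (edgesD F d).ncard ≤ 2) {a b c : H} (ha : (d, a) ∈ F) (hb : (d, b) ∈ F)
    (hc : (d, c) ∈ F) (hab : a ≠ b) : c = a ∨ c = b := by
  by_contra! hcon
  have hsub : ({(d, a), (d, b), (d, c)} : Set (D × H)) ⊆ edgesD F d := by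
    rintro e (rfl | rfl | rfl) <;> exact ⟨‹_›, rfl⟩
  have h3 : ({(d, a), (d, b), (d, c)} : Set (D × H)).ncard = 3 := by
    rw [Set.ncard_eq_three]
    exact ⟨_, _, _, by simpa using hab, by simpa using hcon.1.symm,
      by simpa using hcon.2.symm, rfl⟩
  have := Set.ncard_le_ncard hsub (Set.toFinite _)
  omega

structure IsDoctorPerfectMatching (L ν : Set (D × H)) : Prop where
  subset : ν ⊆ L
  injOn_fst : Set.InjOn Prod.fst ν
  injOn_snd : Set.InjOn Prod.snd ν
  fst_image : Prod.fst '' L ⊆ Prod.fst '' ν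

namespace IsDoctorPerfectMatching

theorem swap (hν : IsDoctorPerfectMatching L ν) {d : D} {u h : H} (hdu : (d, u) ∈ L)
    (hdh : (d, h) ∈ ν) (hu : u ∉ Prod.snd '' ν) :
    IsDoctorPerfectMatching L (insert (d, u) (ν \ {(d, h)})) ∧
      Prod.snd '' insert (d, u) (ν \ {(d, h)}) = insert u (Prod.snd '' ν \ {h}) := by
  have hnew : (d, u) ∉ ν \ {(d, h)} := fun hm => hu ⟨_, hm.1, rfl⟩
  have himage : Prod.snd '' (ν \ {(d, h)}) = Prod.snd '' ν \ {h} := by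
    rw [hν.injOn_snd.image_sdiff, Set.inter_singleton_of_mem hdh, Set.image_singleton]
  refine ⟨⟨?_, ?_, ?_, ?_⟩, by rw [Set.image_insert_eq, himage]⟩
  · exact Set.insert_subset hdu (Set.sdiff_subset.trans hν.subset)
  · refine (Set.injOn_insert hnew).2 ⟨hν.injOn_fst.mono Set.sdiff_subset, ?_⟩
    rintro ⟨f, ⟨hf, hfh⟩, hfd⟩
    exact hfh (hν.injOn_fst hf hdh hfd)
  · refine (Set.injOn_insert hnew).2 ⟨hν.injOn_snd.mono Set.sdiff_subset, ?_⟩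
    rw [himage]
    exact fun hm => hu hm.1
  · refine hν.fst_image.trans ?_
    rintro _ ⟨f, hf, rfl⟩
    by_cases hfd : f = (d, h)
    · exact ⟨(d, u), Set.mem_insert _ _, by rw [hfd]⟩
    · exact ⟨f, Set.mem_insert_of_mem _ ⟨hf, hfd⟩, rfl⟩

variable [Finite D] [Finite H] {X : Set (D ⊕ H)}

theorem ncard_matched (hν : IsDoctorPerfectMatching L ν) (hX : isComponent L X)
    (h2 : 2 ≤ X.ncard) : (Hside X ∩ Prod.snd '' ν).ncard = (Dside X).ncard := by
  -- both sides are in bijection with the edges of `ν` inside `X`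
  let νX : Set (D × H) := {e ∈ ν | Sum.inl e.1 ∈ X}
  have hD : Dside X = Prod.fst '' νX := by
    ext d
    refine ⟨fun hd => ?_, by rintro ⟨e, ⟨-, he⟩, rfl⟩; exact he⟩
    obtain ⟨e, heL, rfl⟩ := hX.exists_mem_of_inl h2 hd
    obtain ⟨f, hf, hfe⟩ := hν.fst_image ⟨e, heL, rfl⟩
    exact ⟨f, ⟨hf, hfe ▸ hd⟩, hfe⟩
  have hH : Hside X ∩ Prod.snd '' ν = Prod.snd '' νX := by
    ext h
    constructor
    · rintro ⟨hh, f, hf, rfl⟩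
      exact ⟨f, ⟨hf, (hX.inl_mem_iff (hν.subset hf)).2 hh⟩, rfl⟩
    · rintro ⟨f, ⟨hf, hfX⟩, rfl⟩
      exact ⟨(hX.inl_mem_iff (hν.subset hf)).1 hfX, f, hf, rfl⟩
  rw [hD, hH, (hν.injOn_fst.mono fun _ he => he.1).ncard_image,
    (hν.injOn_snd.mono fun _ he => he.1).ncard_image]

theorem ncard_unmatched (hν : IsDoctorPerfectMatching L ν) (hX : isComponent L X)
    (h2 : 2 ≤ X.ncard) :
    (Hside X \ Prod.snd '' ν).ncard = (Hside X).ncard - (Dside X).ncard := by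
  rw [← Set.sdiff_self_inter, Set.ncard_sdiff Set.inter_subset_left, hν.ncard_matched hX h2]

theorem ncard_unmatched_le_one (hdeg : ∀ d, (edgesD L d).ncard ≤ 2)
    (hν : IsDoctorPerfectMatching L ν) (hX : isComponent L X) (h2 : 2 ≤ X.ncard) :
    (Hside X \ Prod.snd '' ν).ncard ≤ 1 := by
  have := hX.ncard_Hside_le hdeg
  rw [hν.ncard_unmatched hX h2]
  omega

/-- Flipping `ν` along an alternating walk from `u` to `t`. -/
theorem exists_flip (hdeg : ∀ d, (edgesD L d).ncard ≤ 2) (hν : IsDoctorPerfectMatching L ν)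
    {u t : H} (hu : u ∉ Prod.snd '' ν) (hut : (bipGraph L).Reachable (.inr u) (.inr t)) :
    ∃ ν', IsDoctorPerfectMatching L ν' ∧ Prod.snd '' ν' = insert u (Prod.snd '' ν) \ {t} := by
  obtain ⟨p⟩ := hut
  induction hn : p.length using Nat.strong_induction_on generalizing u ν with
  | _ n ih =>
    cases p with
    | nil => exact ⟨ν, hν, by rw [Set.insert_sdiff_self_of_notMem hu]⟩
    | @cons _ x _ hux q =>
      cases x with
      | inr _ => exact hux.elim
      | inl d =>
        cases q with
        | @cons _ y _ hdy q =>
          cases y with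
          | inl _ => exact hdy.elim
          | inr h =>
            have hdu : (d, u) ∈ L := hux
            have hdh : (d, h) ∈ L := hdy
            have hlen : q.length < n := by simp only [← hn, SimpleGraph.Walk.length_cons]; omega
            by_cases hhu : h = u
            · subst hhu
              exact ih _ hlen hν hu q rfl
            obtain ⟨⟨d', m⟩, hm, rfl⟩ := hν.fst_image ⟨(d, u), hdu, rfl⟩
            have hmu : m ≠ u := fun hmu => hu ⟨_, hm, hmu⟩
            have hmh : m = h := (eq_or_eq_of_ncard_edgesD_le_two (hdeg d') hdu hdh (hν.subset hm)
              (Ne.symm hhu)).resolve_left hmu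
            subst hmh
            obtain ⟨hν₁, himage⟩ := hν.swap hdu hm hu
            have hm₁ : m ∉ Prod.snd '' insert (d', u) (ν \ {(d', m)}) := by
              rw [himage]
              rintro (h | ⟨-, h⟩)
              exacts [hmu h, h rfl]
            obtain ⟨ν', hν', himage'⟩ := ih _ hlen hν₁ hm₁ q rfl
            refine ⟨ν', hν', ?_⟩
            rw [himage', himage, Set.insert_comm, Set.insert_sdiff_singleton,
              Set.insert_eq_of_mem (Set.mem_image_of_mem Prod.snd hm)]

theorem exists_forall_notMem (hdeg : ∀ d, (edgesD L d).ncard ≤ 2)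
    (hν : IsDoctorPerfectMatching L ν) (T : Finset H)
    (hdef : ∀ t ∈ T, ∃ X, isComponent L X ∧ Sum.inr t ∈ X ∧ 2 ≤ X.ncard ∧
      (Dside X).ncard < (Hside X).ncard)
    (hsep : ∀ t ∈ T, ∀ t' ∈ T, (bipGraph L).Reachable (.inr t) (.inr t') → t = t') :
    ∃ ν', IsDoctorPerfectMatching L ν' ∧ ∀ t ∈ T, t ∉ Prod.snd '' ν' := by
  classical
  induction T using Finset.induction_on with
  | empty => exact ⟨ν, hν, by simp⟩
  | @insert t T htT ih =>
    obtain ⟨ν₁, hν₁, hT₁⟩ := ih (fun s hs => hdef s (Finset.mem_insert_of_mem hs))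
      (fun s hs s' hs' => hsep s (Finset.mem_insert_of_mem hs) s' (Finset.mem_insert_of_mem hs'))
    obtain ⟨X, hX, htX, h2, hlt⟩ := hdef t (Finset.mem_insert_self t T)
    obtain ⟨u, ⟨huX, hu⟩⟩ : (Hside X \ Prod.snd '' ν₁).Nonempty := by
      rw [← Set.ncard_pos, hν₁.ncard_unmatched hX h2]
      omega
    obtain ⟨ν', hν', himage⟩ := hν₁.exists_flip hdeg hu (hX.reachable huX htX)
    refine ⟨ν', hν', fun s hs => ?_⟩
    rw [himage]
    rcases Finset.mem_insert.1 hs with rfl | hsT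
    · exact fun h => h.2 rfl
    · rintro ⟨rfl | h, -⟩
      · have := hsep _ (Finset.mem_insert_self t T) _ hs (hX.reachable htX huX)
        exact htT (this ▸ hsT)
      · exact hT₁ s hsT h

end IsDoctorPerfectMatching

end Matching

namespace SSMC

variable {I : SSMC D H} {d : D} {h : H} {e f g : D × H}

section Preferences

theorem prefD_trans_of_mem (he : e ∈ edgesD I.E d) (hf : f ∈ edgesD I.E d)
    (hg : g ∈ edgesD I.E d) : I.prefD d (some e) (some f) → I.prefD d (some f) (some g) →
    I.prefD d (some e) (some g) :=
  I.prefD_trans d _ (Or.inr ⟨e, he, rfl⟩) _ (Or.inr ⟨f, hf, rfl⟩) _ (Or.inr ⟨g, hg, rfl⟩)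

theorem prefH_trans_of_mem (he : e ∈ edgesH I.E h) (hf : f ∈ edgesH I.E h)
    (hg : g ∈ edgesH I.E h) : I.prefH h (some e) (some f) → I.prefH h (some f) (some g) →
    I.prefH h (some e) (some g) :=
  I.prefH_trans h _ (Or.inr ⟨e, he, rfl⟩) _ (Or.inr ⟨f, hf, rfl⟩) _ (Or.inr ⟨g, hg, rfl⟩)

theorem prefH_total_of_mem (he : e ∈ edgesH I.E h) (hf : f ∈ edgesH I.E h) :
    I.prefH h (some e) (some f) ∨ I.prefH h (some f) (some e) :=
  I.prefH_total h _ (Or.inr ⟨e, he, rfl⟩) _ (Or.inr ⟨f, hf, rfl⟩)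

theorem prefH_refl_of_mem (he : e ∈ edgesH I.E h) : I.prefH h (some e) (some e) :=
  (prefH_total_of_mem he he).elim id id

theorem strictH_of_strictH_of_prefH (he : e ∈ edgesH I.E h) (hf : f ∈ edgesH I.E h)
    (hg : g ∈ edgesH I.E h) (hef : I.strictH h (some e) (some f))
    (hfg : I.prefH h (some f) (some g)) : I.strictH h (some e) (some g) :=
  ⟨prefH_trans_of_mem he hf hg hef.1 hfg, fun hge => hef.2 (prefH_trans_of_mem hf hg he hfg hge)⟩

theorem strictD_of_mem_ChD_of_notMem {F : Set (D × H)} (hFE : F ⊆ I.E) (he : e ∈ F)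
    (heC : e ∉ I.ChD F) (hg : g ∈ I.ChD F) (hge : g.1 = e.1) :
    I.strictD e.1 (some g) (some e) := by
  obtain ⟨f, hf, hfe, hnp⟩ : ∃ f ∈ F, f.1 = e.1 ∧ ¬ I.prefD e.1 (some e) (some f) := by
    by_contra! hcon
    exact heC ⟨he, hcon⟩
  have he' : e ∈ edgesD I.E e.1 := ⟨hFE he, rfl⟩
  have hf' : f ∈ edgesD I.E e.1 := ⟨hFE hf, hfe⟩
  have hg' : g ∈ edgesD I.E e.1 := ⟨hFE hg.1, hge⟩
  have hfe' : I.prefD e.1 (some f) (some e) :=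
    (I.prefD_total e.1 _ (Or.inr ⟨e, he', rfl⟩) _ (Or.inr ⟨f, hf', rfl⟩)).resolve_left hnp
  have hgf : I.prefD e.1 (some g) (some f) := hge ▸ hg.2 f hf (hfe.trans hge.symm)
  exact ⟨prefD_trans_of_mem hg' hf' he' hgf hfe',
    fun heg => hnp (prefD_trans_of_mem he' hg' hf' heg hgf)⟩

theorem exists_mem_ChH [Finite D] [Finite H] {G : Set (D × H)} (hGE : G ⊆ I.E)
    (hne : ∃ e ∈ G, e.2 = h) : ∃ e ∈ I.ChH G, e.2 = h := by
  obtain ⟨m, ⟨hmG, rfl⟩, hmax⟩ := (Set.toFinite (edgesH G h)).exists_forall_rel_of_total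
    (r := fun e f => I.prefH h (some e) (some f)) hne
    (fun a ha b hb => prefH_total_of_mem ⟨hGE ha.1, ha.2⟩ ⟨hGE hb.1, hb.2⟩)
    (fun a ha b hb c hc => prefH_trans_of_mem ⟨hGE ha.1, ha.2⟩ ⟨hGE hb.1, hb.2⟩
      ⟨hGE hc.1, hc.2⟩)
  exact ⟨m, ⟨hmG, fun f hf hfm => hmax f ⟨hf, hfm⟩⟩, rfl⟩

end Preferences

section Assignment

variable {ν : Set (D × H)}

theorem muD_eq_some (hinj : Set.InjOn Prod.fst ν) (he : e ∈ ν) (hd : e.1 = d) :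
    muD ν d = some e := by
  have hex : ∃ f, f ∈ ν ∧ f.1 = d := ⟨e, he, hd⟩
  rw [muD, dif_pos hex, hinj hex.choose_spec.1 he (hex.choose_spec.2.trans hd.symm)]

theorem muH_eq_some (hinj : Set.InjOn Prod.snd ν) (he : e ∈ ν) (hh : e.2 = h) :
    muH ν h = some e := by
  have hex : ∃ f, f ∈ ν ∧ f.2 = h := ⟨e, he, hh⟩
  rw [muH, dif_pos hex, hinj hex.choose_spec.1 he (hex.choose_spec.2.trans hh.symm)]

theorem muH_eq_none (hν : ∀ e ∈ ν, e.2 ≠ h) : muH ν h = none := by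
  rw [muH, dif_neg]
  rintro ⟨f, hf, hfh⟩
  exact hν f hf hfh

theorem mem_of_muD_eq_some (hd : muD ν d = some e) : e ∈ ν ∧ e.1 = d := by
  unfold muD at hd
  split_ifs at hd with hex
  exact Option.some.inj hd ▸ hex.choose_spec

theorem mem_of_muH_eq_some (hh : muH ν h = some e) : e ∈ ν ∧ e.2 = h := by
  unfold muH at hh
  split_ifs at hh with hex
  exact Option.some.inj hh ▸ hex.choose_spec

end Assignment

end SSMC

namespace SSMC

variable {I : SSMC D H} {R μ σ : Set (D × H)} {e f g : D × H}

theorem Lset_subset : I.Lset R ⊆ I.E \ R := fun _ he => he.1.1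

/-- Condition (P4) on the partner `g` of the hospital `h`. -/
def DominatesRemoved (I : SSMC D H) (R μ : Set (D × H)) (h : H) (g : D × H) : Prop :=
  ∀ e ∈ R, e.2 = h →
    (I.simD e.1 (some e) (muD μ e.1) → I.prefH h (some g) (some e)) ∧
    (I.strictD e.1 (some e) (muD μ e.1) → I.strictH h (some g) (some e))

/-- What the new partner `g` of a hospital `h` has to satisfy for `h` not to take part in
a blocking edge. -/
def IsGoodPartner (I : SSMC D H) (R μ : Set (D × H)) (h : H) (g : D × H) : Prop :=
  (∃ f ∈ I.Lset R, f.2 = h ∧ I.prefH h (some g) (some f)) ∨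
    ((∀ f ∈ I.Lset R, f.2 ≠ h) ∧ I.DominatesRemoved R μ h g)

namespace preproc

variable (hpre : I.preproc R μ)
include hpre

theorem subset_E : R ⊆ I.E := hpre.1

theorem subset_Lset : μ ⊆ I.Lset R := hpre.2.2.2.1

theorem notMem_setBlock (heR : e ∈ R) : e ∉ I.setBlock (I.Lset R) :=
  fun h => (Set.eq_empty_iff_forall_notMem.1 hpre.2.2.2.2.2.1) e ⟨heR, h⟩

theorem prefD_of_mem (heR : e ∈ R) (hf : f ∈ I.E \ R) (hfe : f.1 = e.1) :
    I.prefD e.1 (some e) (some f) :=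
  hpre.2.2.2.2.2.2 e.1 e heR rfl f hf hfe

theorem exists_muD_eq_some (hf : f ∈ I.E \ R) :
    ∃ g ∈ I.Lset R, g.1 = f.1 ∧ muD μ f.1 = some g := by
  obtain ⟨g, hg, hgf⟩ := hpre.2.2.2.2.1 f.1 ⟨f, hf, rfl⟩
  exact ⟨g, hpre.subset_Lset hg, hgf, muD_eq_some hpre.2.1.2.1 hg hgf⟩

theorem simD_or_strictD (heR : e ∈ R) :
    I.simD e.1 (some e) (muD μ e.1) ∨ I.strictD e.1 (some e) (muD μ e.1) := by
  rcases hμ : muD μ e.1 with _ | fμ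
  · exact .inr (I.prefD_none e.1 e ⟨hpre.subset_E heR, rfl⟩)
  · obtain ⟨hfμ, hfd⟩ := mem_of_muD_eq_some hμ
    have hef := hpre.prefD_of_mem heR (Lset_subset (hpre.subset_Lset hfμ)) hfd
    by_cases hfe : I.prefD e.1 (some fμ) (some e)
    exacts [.inl ⟨hef, hfe⟩, .inr ⟨hef, hfe⟩]

theorem exists_muD_eq_some_of_simD (heR : e ∈ R) (hsim : I.simD e.1 (some e) (muD μ e.1)) :
    ∃ fμ ∈ I.Lset R, fμ.1 = e.1 ∧ muD μ e.1 = some fμ := by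
  rcases hμ : muD μ e.1 with _ | fμ
  · exact absurd (hμ ▸ hsim.2) (I.prefD_none e.1 e ⟨hpre.subset_E heR, rfl⟩).2
  · obtain ⟨hfμ, hfd⟩ := mem_of_muD_eq_some hμ
    exact ⟨fμ, hpre.subset_Lset hfμ, hfd, rfl⟩

theorem not_strictH_of_simD (heR : e ∈ R) (hsim : I.simD e.1 (some e) (muD μ e.1))
    (hf : f ∈ I.Lset R) (hfe : f.2 = e.2) : ¬ I.strictH e.2 (some e) (some f) := by
  intro hst
  obtain ⟨fμ, hfμ, hfd, hμ⟩ := hpre.exists_muD_eq_some_of_simD heR hsim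
  exact hpre.notMem_setBlock heR ⟨hpre.subset_E heR, fun h => (Lset_subset h).2 heR,
    ⟨f, hf, hfe⟩, .inr ⟨fμ, hfμ, hfd, hμ ▸ hsim⟩, fun _ => ⟨f, hf, hfe, hst.1⟩,
    fun _ => ⟨f, hf, hfe, hst⟩⟩

theorem not_prefH_of_strictD (heR : e ∈ R) (hstr : I.strictD e.1 (some e) (muD μ e.1))
    (hf : f ∈ I.Lset R) (hfe : f.2 = e.2) : ¬ I.prefH e.2 (some e) (some f) := by
  intro hpref
  have hsucc : I.dSucc (I.Lset R) e := by
    rcases hμ : muD μ e.1 with _ | fμ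
    · refine .inl fun f' hf' hf'e => ?_
      obtain ⟨g, -, -, hg⟩ := hpre.exists_muD_eq_some (Lset_subset hf')
      rw [hf'e, hμ] at hg
      cases hg
    · obtain ⟨hfμ, hfd⟩ := mem_of_muD_eq_some hμ
      exact .inr ⟨fμ, hpre.subset_Lset hfμ, hfd, hμ ▸ hstr⟩
  have hnsim : ¬ I.dSim (I.Lset R) e := by
    rintro ⟨f', hf', hf'e, -, hf'pref⟩
    obtain ⟨fμ, hfμ, hfd, hμ⟩ := hpre.exists_muD_eq_some (Lset_subset hf')
    rw [hf'e] at hfd hμ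
    rw [hμ] at hstr
    exact hstr.2 (prefD_trans_of_mem ⟨hfμ.1.1.1, hfd⟩ ⟨hf'.1.1.1, hf'e⟩
      ⟨hpre.subset_E heR, rfl⟩ (hfd ▸ hfμ.1.2 f' hf'.1.1 (hf'e.trans hfd.symm)) hf'pref)
  exact hpre.notMem_setBlock heR ⟨hpre.subset_E heR, fun h => (Lset_subset h).2 heR,
    ⟨f, hf, hfe⟩, .inl hsucc, fun _ => ⟨f, hf, hfe, hpref⟩, fun h => absurd h hnsim⟩

end preproc

namespace IsGoodPartner

theorem not_strictH_of_simD (hpre : I.preproc R μ) (hg : I.IsGoodPartner R μ e.2 g)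
    (hgE : g ∈ edgesH I.E e.2) (heR : e ∈ R) (hsim : I.simD e.1 (some e) (muD μ e.1)) :
    ¬ I.strictH e.2 (some e) (some g) := by
  rcases hg with ⟨f, hf, hfh, hgf⟩ | ⟨-, hdom⟩
  · exact fun hst => hpre.not_strictH_of_simD heR hsim hf hfh
      (strictH_of_strictH_of_prefH ⟨hpre.subset_E heR, rfl⟩ hgE ⟨(Lset_subset hf).1, hfh⟩ hst hgf)
  · exact fun hst => hst.2 ((hdom e heR rfl).1 hsim)

theorem not_prefH_of_strictD (hpre : I.preproc R μ) (hg : I.IsGoodPartner R μ e.2 g)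
    (hgE : g ∈ edgesH I.E e.2) (heR : e ∈ R) (hstr : I.strictD e.1 (some e) (muD μ e.1)) :
    ¬ I.prefH e.2 (some e) (some g) := by
  rcases hg with ⟨f, hf, hfh, hgf⟩ | ⟨-, hdom⟩
  · exact fun hpref => hpre.not_prefH_of_strictD heR hstr hf hfh
      (prefH_trans_of_mem ⟨hpre.subset_E heR, rfl⟩ hgE ⟨(Lset_subset hf).1, hfh⟩ hpref hgf)
  · exact ((hdom e heR rfl).2 hstr).2

theorem not_strictH_of_mem_ChD [Finite D] [Finite H] (hg : I.IsGoodPartner R μ e.2 g)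
    (hgE : g ∈ edgesH I.E e.2) (he : e ∈ I.ChD (I.E \ R)) :
    ¬ I.strictH e.2 (some e) (some g) := by
  rcases hg with ⟨f, hf, hfh, hgf⟩ | ⟨hnone, -⟩
  · have hfe : I.prefH e.2 (some f) (some e) := hfh ▸ hf.2 e he hfh.symm
    exact fun hst => hst.2 (prefH_trans_of_mem hgE ⟨(Lset_subset hf).1, hfh⟩ ⟨he.1.1, rfl⟩ hgf hfe)
  · obtain ⟨f, hf, hfh⟩ := exists_mem_ChH (fun _ hx => hx.1.1) ⟨e, he, rfl⟩
    exact absurd hfh (hnone f hf)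

end IsGoodPartner

theorem exists_muH_eq_some (hwh : e.2 ∈ I.S → muH σ e.2 ≠ none)
    (hcov : e.2 ∉ I.S → muH σ e.2 ≠ none) : ∃ g, muH σ e.2 = some g :=
  Option.ne_none_iff_exists'.1 (by by_cases hS : e.2 ∈ I.S; exacts [hwh hS, hcov hS])

theorem not_blocks_of_mem_R (hpre : I.preproc R μ) (heR : e ∈ R)
    (hgood : ∀ g, muH σ e.2 = some g → g ∈ edgesH I.E e.2 ∧ I.IsGoodPartner R μ e.2 g)
    (hcov : e.2 ∉ I.S → muH σ e.2 ≠ none)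
    (hdoc : ∀ f ∈ I.E \ R, f.1 = e.1 → ∃ f' ∈ I.Lset R, f'.1 = e.1 ∧ muD σ e.1 = some f') :
    ¬ I.blocks σ e := by
  rintro ⟨heE, -, -, ⟨hwh, hS⟩, hstr⟩
  obtain ⟨g, hσg⟩ := exists_muH_eq_some hS hcov
  obtain ⟨hgE, hg⟩ := hgood g hσg
  rw [hσg] at hwh hstr
  rcases hpre.simD_or_strictD heR with hsim | hsd
  · obtain ⟨fμ, hfμ, hfd, hμ⟩ := hpre.exists_muD_eq_some_of_simD heR hsim
    obtain ⟨fν, hfν, hfνd, hσd⟩ := hdoc fμ (Lset_subset hfμ) hfd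
    rw [hμ] at hsim
    have hνe : I.prefD e.1 (some fν) (some e) :=
      prefD_trans_of_mem ⟨hfν.1.1.1, hfνd⟩ ⟨hfμ.1.1.1, hfd⟩ ⟨heE, rfl⟩
        (hfνd ▸ hfν.1.2 fμ (Lset_subset hfμ) (hfd.trans hfνd.symm)) hsim.2
    rcases hstr with hsd | ⟨hsh, -⟩
    · exact (hσd ▸ hsd).2 hνe
    · exact hg.not_strictH_of_simD hpre hgE heR (hμ ▸ hsim) hsh
  · exact hg.not_prefH_of_strictD hpre hgE heR hsd hwh

theorem not_blocks_of_mem_E_diff_R [Finite D] [Finite H] (he : e ∈ I.E \ R)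
    (hgood : ∀ g, muH σ e.2 = some g → g ∈ edgesH I.E e.2 ∧ I.IsGoodPartner R μ e.2 g)
    (hcov : e.2 ∉ I.S → (∃ f ∈ I.Lset R, f.2 = e.2) → muH σ e.2 ≠ none)
    (hdoc : ∃ f ∈ I.Lset R, f.1 = e.1 ∧ muD σ e.1 = some f) :
    ¬ I.blocks σ e := by
  rintro ⟨heE, -, hwd, ⟨-, hS⟩, hstr⟩
  obtain ⟨fν, hfν, hfνd, hσd⟩ := hdoc
  rw [hσd] at hwd hstr
  by_cases heC : e ∈ I.ChD (I.E \ R)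
  · have hνe : I.prefD e.1 (some fν) (some e) := hfνd ▸ hfν.1.2 e he hfνd.symm
    rcases hstr with hsd | ⟨hsh, -⟩
    · exact hsd.2 hνe
    · have hL : ∃ f ∈ I.Lset R, f.2 = e.2 := exists_mem_ChH (fun _ hx => hx.1.1) ⟨e, heC, rfl⟩
      obtain ⟨g, hσg⟩ := exists_muH_eq_some hS fun hS' => hcov hS' hL
      obtain ⟨hgE, hg⟩ := hgood g hσg
      rw [hσg] at hsh
      exact hg.not_strictH_of_mem_ChD hgE heC hsh
  · exact (strictD_of_mem_ChD_of_notMem (fun _ hx => hx.1) he heC hfν.1 hfνd).2 hwd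

end SSMC

namespace SSMC

variable {I : SSMC D H} {R μ : Set (D × H)} {X Y : Set (D ⊕ H)} {f : D × H}

theorem memV.isComponent (hX : I.memV R X) : isComponent (I.Lset R) X := by
  rcases hX with hX | hX | hX
  exacts [hX.1.1.1, hX.1.1, hX.1]

theorem memPstar.not_memVplus (hX : I.memPstar R X) : ¬ I.memVplus R X := by
  rintro (⟨hQ, -⟩ | ⟨-, h, rfl, -⟩)
  · exact absurd hX.1.2 hQ.2.ne
  · simpa using hX.1.1.2

theorem memVplus.not_memVminus (hX : I.memVplus R X) : ¬ I.memVminus R X :=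
  fun hm => hm.1.not_memVplus hX

variable [Nonempty D]

-- `d_Y`, `h_Y` and `h̄_Y` of the paper, for `Y ∈ 𝓟*`
noncomputable def leafDoctor (I : SSMC D H) (R : Set (D × H)) (Y : Set (D ⊕ H)) : D :=
  Classical.epsilon fun d => I.leafSet R Y = {d}

theorem memPstar.leafSet_eq (hY : I.memPstar R Y) : I.leafSet R Y = {I.leafDoctor R Y} :=
  Classical.epsilon_spec (Set.ncard_eq_one.1 hY.2)

theorem memPstar.inl_leafDoctor_mem (hY : I.memPstar R Y) : Sum.inl (I.leafDoctor R Y) ∈ Y :=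
  (hY.leafSet_eq ▸ Set.mem_singleton _ : I.leafDoctor R Y ∈ I.leafSet R Y).1

variable [Nonempty H]

noncomputable def leafHospital (I : SSMC D H) (R : Set (D × H)) (Y : Set (D ⊕ H)) : H :=
  Classical.epsilon fun h => (I.leafDoctor R Y, h) ∈ I.Lset R

noncomputable def otherHospital (I : SSMC D H) (R : Set (D × H)) (Y : Set (D ⊕ H)) : H :=
  Classical.epsilon fun h => h ≠ I.leafHospital R Y ∧ (I.leafDoctor R Y, h) ∈ I.E

noncomputable def leafEdge (I : SSMC D H) (R : Set (D × H)) (Y : Set (D ⊕ H)) : D × H :=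
  (I.leafDoctor R Y, I.leafHospital R Y)

noncomputable def otherEdge (I : SSMC D H) (R : Set (D × H)) (Y : Set (D ⊕ H)) : D × H :=
  (I.leafDoctor R Y, I.otherHospital R Y)

namespace memPstar

variable (hY : I.memPstar R Y)
include hY

theorem edgesD_eq : edgesD (I.Lset R) (I.leafDoctor R Y) = {I.leafEdge R Y} := by
  have hd : I.leafDoctor R Y ∈ I.leafSet R Y := hY.leafSet_eq ▸ Set.mem_singleton _
  obtain ⟨e, he⟩ := Set.ncard_eq_one.1 hd.2
  have hemem : e ∈ edgesD (I.Lset R) (I.leafDoctor R Y) := he ▸ Set.mem_singleton e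
  have hleaf : I.leafEdge R Y ∈ I.Lset R :=
    Classical.epsilon_spec (p := fun h => (I.leafDoctor R Y, h) ∈ I.Lset R)
      ⟨e.2, by simpa [← hemem.2] using hemem.1⟩
  have : I.leafEdge R Y ∈ edgesD (I.Lset R) (I.leafDoctor R Y) := ⟨hleaf, rfl⟩
  rw [he, Set.mem_singleton_iff, ← Set.singleton_eq_singleton_iff, ← he] at this
  exact this.symm

theorem leafEdge_mem : I.leafEdge R Y ∈ I.Lset R :=
  (hY.edgesD_eq ▸ Set.mem_singleton _ :
    I.leafEdge R Y ∈ edgesD (I.Lset R) (I.leafDoctor R Y)).1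

theorem eq_leafEdge (hf : f ∈ I.Lset R) (hfd : f.1 = I.leafDoctor R Y) : f = I.leafEdge R Y :=
  (hY.edgesD_eq ▸ ⟨hf, hfd⟩ : f ∈ ({I.leafEdge R Y} : Set (D × H)))

theorem inr_leafHospital_mem : Sum.inr (I.leafHospital R Y) ∈ Y :=
  (isComponent.inl_mem_iff hY.1.1.1 hY.leafEdge_mem).1 hY.inl_leafDoctor_mem

end memPstar

theorem memVminus.leafHospital_mem (hY : I.memVminus R Y) : I.leafHospital R Y ∈ I.S := by
  obtain ⟨hps, d, hd, h, hdh, hS⟩ := hY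
  rw [hps.leafSet_eq] at hd
  subst hd
  obtain rfl : h = I.leafHospital R Y := congrArg Prod.snd (hps.eq_leafEdge hdh rfl)
  exact hS

/-- An arc `X → Y` of `𝐃`, stated with the canonical `d_Y`, `h_Y`, `h̄_Y`. -/
structure ArcData (I : SSMC D H) (R μ : Set (D × H)) (X Y : Set (D ⊕ H)) : Prop where
  source : I.memV R X
  target : I.memPstar R Y
  other_ne : I.otherHospital R Y ≠ I.leafHospital R Y
  otherEdge_mem : I.otherEdge R Y ∈ I.E
  inr_other_mem : Sum.inr (I.otherHospital R Y) ∈ X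
  leaf_strict : I.strictD (I.leafDoctor R Y) (some (I.leafEdge R Y)) (some (I.otherEdge R Y))
  of_pstar : I.memPstar R X → I.leafHospital R X = I.otherHospital R Y ∧
    I.strictH (I.otherHospital R Y) (some (I.otherEdge R Y)) (some (I.leafEdge R X))
  of_Q : I.memQ R X → ∃ f ∈ I.Lset R, f.2 = I.otherHospital R Y ∧
    I.prefH (I.otherHospital R Y) (some (I.otherEdge R Y)) (some f)
  of_Rcal : I.memRcal R X → I.DominatesRemoved R μ (I.otherHospital R Y) (I.otherEdge R Y)

theorem arc.data [Finite D] [Finite H] (hdeg : ∀ d, (edgesD I.E d).ncard ≤ 2)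
    (harc : I.arc R μ X Y) : I.ArcData R μ X Y := by
  obtain ⟨hX, -, -, hY, d, h, hb, hd, hdh, hne, hbE, -, hbX, hP1, hP2, hP3, hP4⟩ := harc
  rw [hY.leafSet_eq, Set.mem_singleton_iff] at hd
  subst hd
  obtain rfl : h = I.leafHospital R Y := congrArg Prod.snd (hY.eq_leafEdge hdh rfl)
  have hother : I.otherHospital R Y ≠ I.leafHospital R Y ∧ I.otherEdge R Y ∈ I.E :=
    Classical.epsilon_spec (p := fun h => h ≠ I.leafHospital R Y ∧ (I.leafDoctor R Y, h) ∈ I.E)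
      ⟨hb, hne, hbE⟩
  obtain rfl : hb = I.otherHospital R Y := (eq_or_eq_of_ncard_edgesD_le_two (hdeg _)
    (Lset_subset hdh).1 hother.2 hbE hother.1.symm).resolve_left hne
  refine ⟨hX, hY, hother.1, hother.2, hbX, hP1, fun hXp => ?_, hP3, hP4⟩
  obtain ⟨d', -, hd', hd'h', rfl, hst⟩ := hP2 hXp
  rw [hXp.leafSet_eq, Set.mem_singleton_iff] at hd'
  subst hd'
  have hXe := hXp.eq_leafEdge hd'h' rfl
  exact ⟨(congrArg Prod.snd hXe).symm, hXe ▸ hst⟩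

namespace ArcData

theorem source_eq {X' : Set (D ⊕ H)} (h : I.ArcData R μ X Y) (h' : I.ArcData R μ X' Y) :
    X = X' :=
  isComponent.eq_of_mem h.source.isComponent h'.source.isComponent h.inr_other_mem
    h'.inr_other_mem

theorem isGoodPartner (h : I.ArcData R μ X Y) :
    I.IsGoodPartner R μ (I.otherHospital R Y) (I.otherEdge R Y) := by
  rcases h.source with hXp | hXQ | hXR
  · obtain ⟨heq, hst⟩ := h.of_pstar hXp
    exact .inl ⟨I.leafEdge R X, hXp.leafEdge_mem, heq, hst.1⟩
  · exact .inl (h.of_Q hXQ)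
  · refine .inr ⟨fun f hf hfh => ?_, h.of_Rcal hXR⟩
    obtain ⟨hXc, h', rfl, -⟩ := hXR
    have hfX := (hXc.inl_mem_iff hf).2 (hfh ▸ h.inr_other_mem)
    simp at hfX

end ArcData

end SSMC

namespace SSMC

variable {I : SSMC D H} {R μ ν : Set (D × H)} {A : Set (Set (D ⊕ H))}
  {next : Set (D ⊕ H) → Set (D ⊕ H)} {X Z : Set (D ⊕ H)}

/-- `A` and `next` select, for every `X ∈ 𝓥⁺`, one directed path of `𝐃` into `𝓥⁻`. -/
abbrev ArcPathSystem (I : SSMC D H) (R μ : Set (D × H)) (A : Set (Set (D ⊕ H)))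
    (next : Set (D ⊕ H) → Set (D ⊕ H)) : Prop :=
  IsPathSystem (I.arc R μ) {X | I.memVplus R X} {X | I.memVminus R X} A next

theorem preproc.isDoctorPerfectMatching (hpre : I.preproc R μ) :
    IsDoctorPerfectMatching (I.Lset R) μ := by
  refine ⟨hpre.subset_Lset, hpre.2.1.2.1, hpre.2.1.2.2, ?_⟩
  rintro _ ⟨f, hf, rfl⟩
  obtain ⟨g, hg, hgf⟩ := hpre.2.2.2.2.1 f.1 ⟨f, Lset_subset hf, rfl⟩
  exact ⟨g, hg, hgf⟩

theorem ncard_edgesD_Lset_le [Finite D] [Finite H] (hdeg : ∀ d, (edgesD I.E d).ncard ≤ 2)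
    (d : D) : (edgesD (I.Lset R) d).ncard ≤ 2 :=
  (Set.ncard_le_ncard (t := edgesD I.E d) (fun _ he => ⟨(Lset_subset he.1).1, he.2⟩)
    (Set.toFinite _)).trans (hdeg d)

namespace ArcPathSystem

variable (hA : I.ArcPathSystem R μ A next)
include hA

theorem memPstar (hZ : Z ∈ A) : I.memPstar R Z := by
  obtain ⟨a, ha, rfl⟩ := hA.exists_eq_next Z hZ
  exact (hA.next_mem a ha).2.2.2.2.1

theorem leafDoctor_injOn [Nonempty D] : Set.InjOn (I.leafDoctor R) A := fun _ hY _ hZ hYZ =>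
  isComponent.eq_of_mem (hA.memPstar hY).1.1.1 (hA.memPstar hZ).1.1.1
    (hA.memPstar hY).inl_leafDoctor_mem (hYZ ▸ (hA.memPstar hZ).inl_leafDoctor_mem)

variable [Finite D] [Finite H] [Nonempty D] [Nonempty H]
  (hdeg : ∀ d, (edgesD I.E d).ncard ≤ 2)
include hdeg

/-- Arcs of `𝐃` into `A` are arcs of the selected paths: in-degrees in `𝐃` are at most one. -/
theorem eq_next_of_arcData (hZ : Z ∈ A) (harc : I.ArcData R μ X Z) :
    Z = next X ∧ (I.memVplus R X ∨ (X ∈ A ∧ ¬ I.memVminus R X)) := by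
  obtain ⟨a, ha, rfl⟩ := hA.exists_eq_next Z hZ
  obtain rfl := harc.source_eq ((hA.next_mem a ha).2.data hdeg)
  exact ⟨rfl, ha⟩

theorem exists_arc (hZ : Z ∈ A) : ∃ X, I.ArcData R μ X Z ∧ Z = next X ∧
    (I.memVplus R X ∨ (X ∈ A ∧ ¬ I.memVminus R X)) := by
  obtain ⟨a, ha, rfl⟩ := hA.exists_eq_next Z hZ
  exact ⟨a, (hA.next_mem a ha).2.data hdeg, rfl, ha⟩

theorem otherHospital_injOn : Set.InjOn (I.otherHospital R) A := by
  intro Y hY Z hZ hYZ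
  obtain ⟨X, hXY, rfl, -⟩ := hA.exists_arc hdeg hY
  obtain ⟨X', hXZ, rfl, -⟩ := hA.exists_arc hdeg hZ
  rw [isComponent.eq_of_mem hXY.source.isComponent hXZ.source.isComponent hXY.inr_other_mem
    (hYZ ▸ hXZ.inr_other_mem)]

end ArcPathSystem

variable [Nonempty D] [Nonempty H]

/-- The hospital of a component `X ∈ 𝓠` left unmatched: the start `h̄` of the selected path
out of `X` if `X ∈ 𝓥⁺`, and otherwise a hospital of `X` in `S`. -/
noncomputable def target (I : SSMC D H) (R : Set (D × H))
    (next : Set (D ⊕ H) → Set (D ⊕ H)) (X : Set (D ⊕ H)) : H :=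
  if I.memVplus R X then I.otherHospital R (next X)
  else Classical.epsilon fun h => Sum.inr h ∈ X ∧ h ∈ I.S

theorem target_of_not_memVplus (hX : I.memQ R X) (hXv : ¬ I.memVplus R X) :
    Sum.inr (I.target R next X) ∈ X ∧ I.target R next X ∈ I.S := by
  have hS : ∃ h, Sum.inr h ∈ X ∧ h ∈ I.S := by
    by_contra! hno
    exact hXv (.inl ⟨hX, fun h hh => hno h hh⟩)
  rw [target, if_neg hXv]
  exact Classical.epsilon_spec hS

namespace ArcPathSystem

variable [Finite D] [Finite H] (hA : I.ArcPathSystem R μ A next)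
  (hdeg : ∀ d, (edgesD I.E d).ncard ≤ 2)
include hA hdeg

theorem inr_target_mem (hX : I.memQ R X) : Sum.inr (I.target R next X) ∈ X := by
  by_cases hXv : I.memVplus R X
  · rw [target, if_pos hXv]
    exact ((hA.next_mem X (.inl hXv)).2.data hdeg).inr_other_mem
  · exact (target_of_not_memVplus hX hXv).1

theorem target_eq (hZ : Z ∈ A) (harc : I.ArcData R μ X Z) (hX : I.memQ R X) :
    I.target R next X = I.otherHospital R Z := by
  obtain ⟨rfl, hXv | ⟨hXA, -⟩⟩ := hA.eq_next_of_arcData hdeg hZ harc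
  · rw [target, if_pos hXv]
  · exact absurd (hA.memPstar hXA).1.2 hX.2.ne

theorem exists_matching (hpre : I.preproc R μ) :
    ∃ ν, IsDoctorPerfectMatching (I.Lset R) ν ∧
      ∀ X, I.memQ R X → I.target R next X ∉ Prod.snd '' ν := by
  let T := (Set.toFinite {t | ∃ X, I.memQ R X ∧ I.target R next X = t}).toFinset
  obtain ⟨ν, hν, hT⟩ := hpre.isDoctorPerfectMatching.exists_forall_notMem
    (ncard_edgesD_Lset_le hdeg) T
    (fun t ht => by
      obtain ⟨X, hX, rfl⟩ := (Set.Finite.mem_toFinset _).1 ht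
      exact ⟨X, hX.1.1, hA.inr_target_mem hdeg hX, hX.1.2, hX.2⟩)
    (fun t ht t' ht' hreach => by
      obtain ⟨X, hX, rfl⟩ := (Set.Finite.mem_toFinset _).1 ht
      obtain ⟨X', hX', rfl⟩ := (Set.Finite.mem_toFinset _).1 ht'
      have hX'X : Sum.inr (I.target R next X') ∈ X :=
        (hX.1.1.mem_iff_reachable (hA.inr_target_mem hdeg hX)).2 hreach
      rw [hX.1.1.eq_of_mem hX'.1.1 hX'X (hA.inr_target_mem hdeg hX')])
  exact ⟨ν, hν, fun X hX => hT _ ((Set.Finite.mem_toFinset _).2 ⟨X, hX, rfl⟩)⟩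

end ArcPathSystem

noncomputable def shift (I : SSMC D H) (R ν : Set (D × H)) (A : Set (Set (D ⊕ H))) :
    Set (D × H) :=
  (ν \ I.leafEdge R '' A) ∪ I.otherEdge R '' A

end SSMC

namespace SSMC

variable {I : SSMC D H} {R μ ν : Set (D × H)} {A : Set (Set (D ⊕ H))}
  {next : Set (D ⊕ H) → Set (D ⊕ H)} {X Y Z : Set (D ⊕ H)} {h : H} {e g : D × H}
  [Nonempty D] [Nonempty H]

theorem _root_.IsDoctorPerfectMatching.leafEdge_mem (hν : IsDoctorPerfectMatching (I.Lset R) ν)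
    (hY : I.memPstar R Y) : I.leafEdge R Y ∈ ν := by
  obtain ⟨g, hg, hgd⟩ := hν.fst_image ⟨_, hY.leafEdge_mem, rfl⟩
  rwa [← hY.eq_leafEdge (hν.subset hg) hgd]

theorem ArcData.otherEdge_notMem (hpre : I.preproc R μ) (h : I.ArcData R μ X Y) :
    I.otherEdge R Y ∉ R := fun hR =>
  h.leaf_strict.2 (hpre.prefD_of_mem hR (Lset_subset h.target.leafEdge_mem) rfl)

theorem shift_injOn_fst (hA : I.ArcPathSystem R μ A next)
    (hν : IsDoctorPerfectMatching (I.Lset R) ν) : Set.InjOn Prod.fst (I.shift R ν A) := by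
  -- the only `L`-edge at a moved doctor is removed
  have hkey : ∀ e ∈ ν \ I.leafEdge R '' A, ∀ Z ∈ A, e.1 ≠ I.leafDoctor R Z :=
    fun e ⟨he, heA⟩ Z hZ hed =>
      heA ⟨Z, hZ, ((hA.memPstar hZ).eq_leafEdge (hν.subset he) hed).symm⟩
  rintro e (he | ⟨Y, hY, rfl⟩) f (hf | ⟨Z, hZ, rfl⟩) hef
  · exact hν.injOn_fst he.1 hf.1 hef
  · exact absurd hef (hkey e he Z hZ)
  · exact absurd hef.symm (hkey f hf Y hY)
  · rw [hA.leafDoctor_injOn hY hZ hef]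

section

variable [Finite D] [Finite H] (hdeg : ∀ d, (edgesD I.E d).ncard ≤ 2)
  (hA : I.ArcPathSystem R μ A next) (hν : IsDoctorPerfectMatching (I.Lset R) ν)
include hdeg hA hν

theorem shift_subset (hpre : I.preproc R μ) : I.shift R ν A ⊆ I.E \ R := by
  rintro e (⟨he, -⟩ | ⟨Z, hZ, rfl⟩)
  · exact Lset_subset (hν.subset he)
  · obtain ⟨X, hXZ, -⟩ := hA.exists_arc hdeg hZ
    exact ⟨hXZ.otherEdge_mem, hXZ.otherEdge_notMem hpre⟩

theorem isGoodPartner_of_muH_shift (hg : muH (I.shift R ν A) h = some g) :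
    g ∈ edgesH I.E h ∧ I.IsGoodPartner R μ h g := by
  obtain ⟨hgσ | ⟨Z, hZ, rfl⟩, rfl⟩ := mem_of_muH_eq_some hg
  · have hgE : g ∈ edgesH I.E g.2 := ⟨(Lset_subset (hν.subset hgσ.1)).1, rfl⟩
    exact ⟨hgE, .inl ⟨g, hν.subset hgσ.1, rfl, prefH_refl_of_mem hgE⟩⟩
  · obtain ⟨X, hXZ, -⟩ := hA.exists_arc hdeg hZ
    exact ⟨⟨hXZ.otherEdge_mem, rfl⟩, hXZ.isGoodPartner⟩

theorem muH_shift_leafHospital_eq_none (hY : Y ∈ A) (hYm : I.memVminus R Y) :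
    muH (I.shift R ν A) (I.leafHospital R Y) = none := by
  have hYp := hA.memPstar hY
  refine muH_eq_none ?_
  rintro g (⟨hg, hgA⟩ | ⟨Z, hZ, rfl⟩) hgh
  · exact hgA ⟨Y, hY, hν.injOn_snd (hν.leafEdge_mem hYp) hg hgh.symm⟩
  · have hgh : I.otherHospital R Z = I.leafHospital R Y := hgh
    obtain ⟨X, hXZ, -, hXv | ⟨-, hXm⟩⟩ := hA.exists_arc hdeg hZ
    all_goals
      obtain rfl := hXZ.source.isComponent.eq_of_mem hYp.1.1.1 hXZ.inr_other_mem
        (hgh ▸ hYp.inr_leafHospital_mem)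
    exacts [hXv.not_memVminus hYm, hXm hYm]

variable (hνt : ∀ X, I.memQ R X → I.target R next X ∉ Prod.snd '' ν)
include hνt

theorem mem_leafEdge_image (hZ : Z ∈ A) (he : e ∈ ν) (heh : e.2 = I.otherHospital R Z) :
    e ∈ I.leafEdge R '' A := by
  obtain ⟨X, hXZ, -, hXv⟩ := hA.exists_arc hdeg hZ
  rcases hXZ.source with hXp | hXQ | ⟨hXc, h', rfl, -⟩
  · have hXA : X ∈ A := hXv.resolve_left hXp.not_memVplus |>.1
    exact ⟨X, hXA, hν.injOn_snd (hν.leafEdge_mem hXp) he ((hXZ.of_pstar hXp).1.trans heh.symm)⟩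
  · exact absurd ⟨e, he, heh.trans (hA.target_eq hdeg hZ hXZ hXQ).symm⟩ (hνt X hXQ)
  · have := (hXc.inl_mem_iff (hν.subset he)).2 (heh ▸ hXZ.inr_other_mem)
    simp at this

theorem shift_injOn_snd : Set.InjOn Prod.snd (I.shift R ν A) := by
  have hkey : ∀ e ∈ ν \ I.leafEdge R '' A, ∀ Z ∈ A, e.2 ≠ I.otherHospital R Z :=
    fun e ⟨he, heA⟩ Z hZ heh => heA (mem_leafEdge_image hdeg hA hν hνt hZ he heh)
  rintro e (he | ⟨Y, hY, rfl⟩) f (hf | ⟨Z, hZ, rfl⟩) hef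
  · exact hν.injOn_snd he.1 hf.1 hef
  · exact absurd hef (hkey e he Z hZ)
  · exact absurd hef.symm (hkey f hf Y hY)
  · rw [hA.otherHospital_injOn hdeg hY hZ hef]

theorem muH_shift_otherHospital (hZ : Z ∈ A) :
    muH (I.shift R ν A) (I.otherHospital R Z) = some (I.otherEdge R Z) :=
  muH_eq_some (shift_injOn_snd hdeg hA hν hνt) (.inr ⟨Z, hZ, rfl⟩) rfl

theorem muH_shift_leafHospital (hY : Y ∈ A) (hYm : ¬ I.memVminus R Y) :
    ∃ g, muH (I.shift R ν A) (I.leafHospital R Y) = some g ∧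
      I.strictH (I.leafHospital R Y) (some g) (some (I.leafEdge R Y)) := by
  obtain ⟨hnext, harc⟩ := hA.next_mem Y (.inr ⟨hY, hYm⟩)
  obtain ⟨heq, hst⟩ := (harc.data hdeg).of_pstar (hA.memPstar hY)
  rw [heq]
  exact ⟨_, muH_shift_otherHospital hdeg hA hν hνt hnext, hst⟩

theorem muH_shift_ne_none_of_mem_image (hS : h ∉ I.S) (hh : h ∈ Prod.snd '' ν) :
    muH (I.shift R ν A) h ≠ none := by
  obtain ⟨g, hg, rfl⟩ := hh
  by_cases hgA : g ∈ I.leafEdge R '' A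
  · obtain ⟨Y, hY, rfl⟩ := hgA
    by_cases hYm : I.memVminus R Y
    · exact absurd hYm.leafHospital_mem hS
    · obtain ⟨g', hg', -⟩ := muH_shift_leafHospital hdeg hA hν hνt hY hYm
      simp [leafEdge, hg']
  · simp [muH_eq_some (shift_injOn_snd hdeg hA hν hνt) (.inl ⟨hg, hgA⟩) rfl]

theorem muH_shift_ne_none (hS : h ∉ I.S)
    (hh : (∃ f ∈ I.Lset R, f.2 = h) ∨ ∃ f ∈ R, f.2 = h) : muH (I.shift R ν A) h ≠ none := by
  by_cases hν_h : h ∈ Prod.snd '' ν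
  · exact muH_shift_ne_none_of_mem_image hdeg hA hν hνt hS hν_h
  by_cases hL : ∃ f ∈ I.Lset R, f.2 = h
  · -- `h` is the unique `ν`-unmatched hospital of its component, which therefore lies in `𝓠`
    obtain ⟨f, hf, rfl⟩ := hL
    set X := componentOf (I.Lset R) (Sum.inr f.2)
    have hXc : isComponent (I.Lset R) X := isComponent_componentOf _
    have hhX : Sum.inr f.2 ∈ X := mem_componentOf_self _
    have h2 : 2 ≤ X.ncard := (Set.one_lt_ncard_iff (Set.toFinite _)).2
      ⟨_, _, (hXc.inl_mem_iff hf).2 hhX, hhX, Sum.inl_ne_inr⟩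
    have hunm := hν.ncard_unmatched hXc h2
    have hpos : 0 < (Hside X \ Prod.snd '' ν).ncard :=
      (Set.ncard_pos (Set.toFinite _)).2 ⟨f.2, hhX, hν_h⟩
    have hXQ : I.memQ R X := ⟨⟨hXc, h2⟩, by omega⟩
    have ht : f.2 = I.target R next X := (Set.ncard_le_one_iff (Set.toFinite _)).1
      (hν.ncard_unmatched_le_one (ncard_edgesD_Lset_le hdeg) hXc h2) ⟨hhX, hν_h⟩
      ⟨hA.inr_target_mem hdeg hXQ, hνt X hXQ⟩
    by_cases hXv : I.memVplus R X
    · rw [ht, target, if_pos hXv,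
        muH_shift_otherHospital hdeg hA hν hνt (hA.next_mem X (.inl hXv)).1]
      simp
    · exact absurd (ht ▸ (target_of_not_memVplus hXQ hXv).2) hS
  · -- `{h}` is a component in `𝓡 ⊆ 𝓥⁺`, so a selected path starts at `h`
    have hLh : ∀ f ∈ I.Lset R, f.2 ≠ h := fun f hf hfh => hL ⟨f, hf, hfh⟩
    have hsing := componentOf_inr_eq_singleton hLh
    have hRc : I.memRcal R (componentOf (I.Lset R) (.inr h)) :=
      ⟨isComponent_componentOf _, h, hsing, hS, hh.resolve_left hL⟩
    obtain ⟨hZ, harc⟩ := hA.next_mem _ (.inl (.inr hRc))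
    have hmem := (Set.ext_iff.1 hsing _).1 (harc.data hdeg).inr_other_mem
    rw [Set.mem_singleton_iff, Sum.inr.injEq] at hmem
    rw [← hmem, muH_shift_otherHospital hdeg hA hν hνt hZ]
    simp

theorem not_blocks_shift_of_leafDoctor (hY : Y ∈ A) (hed : e.1 = I.leafDoctor R Y) :
    ¬ I.blocks (I.shift R ν A) e := by
  rintro ⟨heE, heσ, -, ⟨hwh, hS⟩, -⟩
  obtain ⟨X, hXY, -⟩ := hA.exists_arc hdeg hY
  have he : (I.leafDoctor R Y, e.2) ∈ I.E := hed ▸ heE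
  rcases eq_or_eq_of_ncard_edgesD_le_two (hdeg _) (Lset_subset (hA.memPstar hY).leafEdge_mem).1
    hXY.otherEdge_mem he hXY.other_ne.symm with hh | hh
  · have heY : e = I.leafEdge R Y := Prod.ext hed hh
    by_cases hYm : I.memVminus R Y
    · rw [hh] at hS
      exact hS hYm.leafHospital_mem (muH_shift_leafHospital_eq_none hdeg hA hν hY hYm)
    · obtain ⟨g, hg, hst⟩ := muH_shift_leafHospital hdeg hA hν hνt hY hYm
      rw [heY] at hwh
      exact hst.2 (hg ▸ hwh)
  · exact heσ (.inr ⟨Y, hY, (Prod.ext hed hh).symm⟩)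

end

end SSMC

namespace SSMC

variable {I : SSMC D H} {R μ ν : Set (D × H)} {A : Set (Set (D ⊕ H))}
  {next : Set (D ⊕ H) → Set (D ⊕ H)} {d : D} {f : D × H} [Nonempty D] [Nonempty H]

theorem exists_muD_shift (hpre : I.preproc R μ) (hA : I.ArcPathSystem R μ A next)
    (hν : IsDoctorPerfectMatching (I.Lset R) ν) (hd : ∀ Y ∈ A, I.leafDoctor R Y ≠ d)
    (hf : f ∈ I.E \ R) (hfd : f.1 = d) :
    ∃ f' ∈ I.Lset R, f'.1 = d ∧ muD (I.shift R ν A) d = some f' := by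
  obtain ⟨g, hgL, hgd, -⟩ := hpre.exists_muD_eq_some hf
  obtain ⟨g', hg', hg'd⟩ := hν.fst_image ⟨g, hgL, rfl⟩
  have hg'A : g' ∉ I.leafEdge R '' A := by
    rintro ⟨Y, hY, rfl⟩
    exact hd Y hY (hg'd.trans (hgd.trans hfd))
  have hg'f : g'.1 = d := hg'd.trans (hgd.trans hfd)
  exact ⟨g', hν.subset hg', hg'f, muD_eq_some (shift_injOn_fst hA hν) (.inl ⟨hg', hg'A⟩) hg'f⟩

theorem stable_shift [Finite D] [Finite H] (hdeg : ∀ d, (edgesD I.E d).ncard ≤ 2)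
    (hpre : I.preproc R μ) (hA : I.ArcPathSystem R μ A next)
    (hν : IsDoctorPerfectMatching (I.Lset R) ν)
    (hνt : ∀ X, I.memQ R X → I.target R next X ∉ Prod.snd '' ν) :
    I.stable (I.shift R ν A) := by
  refine ⟨⟨fun e he => (shift_subset hdeg hA hν hpre he).1, shift_injOn_fst hA hν,
    shift_injOn_snd hdeg hA hν hνt⟩, fun e hblock => ?_⟩
  by_cases hmov : ∃ Y ∈ A, e.1 = I.leafDoctor R Y
  · obtain ⟨Y, hY, hed⟩ := hmov
    exact not_blocks_shift_of_leafDoctor hdeg hA hν hνt hY hed hblock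
  have hunmoved : ∀ Y ∈ A, I.leafDoctor R Y ≠ e.1 := fun Y hY hYe => hmov ⟨Y, hY, hYe.symm⟩
  have hgood := fun g hg => isGoodPartner_of_muH_shift hdeg hA hν (h := e.2) (g := g) hg
  by_cases heR : e ∈ R
  · exact not_blocks_of_mem_R hpre heR hgood
      (fun hS => muH_shift_ne_none hdeg hA hν hνt hS (.inr ⟨e, heR, rfl⟩))
      (fun f hf hfd => exists_muD_shift hpre hA hν hunmoved hf hfd) hblock
  · exact not_blocks_of_mem_E_diff_R ⟨hblock.1, heR⟩ hgood
      (fun hS hL => muH_shift_ne_none hdeg hA hν hνt hS (.inl hL))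
      (exists_muD_shift hpre hA hν hunmoved ⟨hblock.1, heR⟩ rfl) hblock

end SSMC

theorem paths_imply_stable_general {D H : Type} [Fintype D] [Fintype H]
    (I : SSMC D H) (hdeg : ∀ d : D, (edgesD I.E d).ncard ≤ 2)
    (R μ : Set (D × H)) (hpre : I.preproc R μ)
    (hpath : ∀ X : Set (D ⊕ H), I.memVplus R X →
      ∃ Y : Set (D ⊕ H), I.memVminus R Y ∧
        Relation.ReflTransGen (I.arc R μ) X Y) :
    ∃ σ : Set (D × H), I.stable σ := by
  by_cases hne : Nonempty D ∧ Nonempty H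
  swap
  · exact ⟨∅, ⟨Set.empty_subset _, by simp, by simp⟩, fun e _ => hne ⟨⟨e.1⟩, ⟨e.2⟩⟩⟩
  obtain ⟨_, _⟩ := hne
  obtain ⟨A, next, hA⟩ := exists_isPathSystem (I.arc R μ)
    (Set.disjoint_left.2 fun _ hX => SSMC.memVplus.not_memVminus hX) hpath
  obtain ⟨ν, hν, hνt⟩ := SSMC.ArcPathSystem.exists_matching hA hdeg hpre
  exact ⟨_, SSMC.stable_shift hdeg hpre hA hν hνt⟩

/-- in the bounded-degree setting with a critical hospital, if
every `X ∈ 𝓥⁺` has a directed path in `𝐃` to some `Y ∈ 𝓥⁻`, then there exists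
a stable matching in `G`. -/
theorem paths_imply_stable {D H : Type} [Fintype D] [Fintype H]
    (I : SSMC D H) (hdeg : ∀ d : D, (edgesD I.E d).ncard ≤ 2)
    (R μ : Set (D × H)) (hpre : I.preproc R μ)
    (hcrit : ∃ h : H, I.critical R μ h)
    (hpath : ∀ X : Set (D ⊕ H), I.memVplus R X →
      ∃ Y : Set (D ⊕ H), I.memVminus R Y ∧
        Relation.ReflTransGen (I.arc R μ) X Y) :
    ∃ σ : Set (D × H), I.stable σ :=
  paths_imply_stable_general I hdeg R μ hpre hpath
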